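/- Let G be a connected graph and F ⊂ ∇_G a subset of codimension 1 (dim conv(F) = N − 2 in the hyperplane of coordinate-sum-zero vectors) with 0 ∉ conv(F). If for every coherently oriented cycle O⃗ in G one has |E(G⃗_F) ∩ E(O⃗)| = |E(G⃗_F) ∩ E(−O⃗)|, then F is a facet of ∇_G. -/

import Mathlib

noncomputable def stdBasis {N : ℕ} (i : Fin N) : Fin N → ℝ := Pi.single i 1

def nabla {N : ℕ} (G : SimpleGraph (Fin N)) : Set (Fin N → ℝ) :=
  {x | ∃ i j, G.Adj i j ∧ x = stdBasis i - stdBasis j}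

noncomputable def inn {N : ℕ} (x α : Fin N → ℝ) : ℝ := ∑ i, x i * α i

def IsFace {N : ℕ} (G : SimpleGraph (Fin N)) (F : Set (Fin N → ℝ)) : Prop :=
  ∃ α : Fin N → ℝ, (∀ x ∈ nabla G, -1 ≤ inn x α) ∧
    F = {x | x ∈ nabla G ∧ inn x α = -1}

def IsFacet {N : ℕ} (G : SimpleGraph (Fin N)) (F : Set (Fin N → ℝ)) : Prop :=
  IsFace G F ∧ Module.finrank ℝ (vectorSpan ℝ F) = N - 2

def faceGraph {N : ℕ} (F : Set (Fin N → ℝ)) : SimpleGraph (Fin N) :=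
  SimpleGraph.fromRel (fun i j => stdBasis i - stdBasis j ∈ F)

def MaxBipartiteSubgraph {N : ℕ} (G H : SimpleGraph (Fin N)) : Prop :=
  H ≤ G ∧ H.Colorable 2 ∧ ∀ H', H' ≤ G → H'.Colorable 2 → H ≤ H' → H' = H

def inducedOn {N : ℕ} (G : SimpleGraph (Fin N)) (s : Set (Fin N)) : SimpleGraph (Fin N) where
  Adj i j := G.Adj i j ∧ i ∈ s ∧ j ∈ s
  symm := by constructor; intro i j h; exact ⟨h.1.symm, h.2.2, h.2.1⟩
  loopless := by constructor; intro i h; exact G.ne_of_adj h.1 rfl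


/-!
The signed indicator `faceSign F i j` (`1` if `e_i - e_j ∈ F`, `-1` if `e_j - e_i ∈ F`) is an
antisymmetric edge weight, and the balance hypothesis says exactly that it sums to zero around
every cycle. Cancelling cycles one at a time (as `Walk.bypass` does) shows that every closed walk
has weight zero, so on a connected graph the weight is a discrete gradient:
`faceSign F i j = α j - α i`. Then `⟨e_i - e_j, α⟩ = -faceSign F i j ≥ -1`, with equality
exactly on `F`, because `0 ∉ conv F` forbids both orientations of an edge from lying in `F`.
-/

namespace SimpleGraph.Walk

variable {V A : Type*} [AddCommGroup A] {G : SimpleGraph V} (w : V → V → A)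

def weight {u v : V} (p : G.Walk u v) : A := (p.darts.map fun d => w d.fst d.snd).sum

@[simp]
lemma weight_nil {u : V} : (nil : G.Walk u u).weight w = 0 := rfl

@[simp]
lemma weight_cons {u v x : V} (h : G.Adj u v) (p : G.Walk v x) :
    (cons h p).weight w = w u v + p.weight w := by
  simp [weight]

lemma weight_append {u v x : V} (p : G.Walk u v) (q : G.Walk v x) :
    (p.append q).weight w = p.weight w + q.weight w := by
  simp [weight]

lemma weight_eq_sum_getVert {u v : V} (p : G.Walk u v) :
    p.weight w = ∑ r : Fin p.length, w (p.getVert r) (p.getVert (r + 1)) := by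
  induction p with
  | nil => exact (Fin.sum_univ_zero _).symm
  | cons h q ih => rw [weight_cons, ih, length_cons, Fin.sum_univ_succ]; simp

variable {w}

lemma weight_reverse (hw : ∀ i j, w j i = -w i j) {u v : V} (p : G.Walk u v) :
    p.reverse.weight w = -p.weight w := by
  induction p with
  | nil => simp
  | cons h q ih =>
    rw [reverse_cons, weight_append, ih, weight_cons, weight_cons, weight_nil, hw, neg_add]
    abel

lemma weight_cons_of_isPath (hw : ∀ i j, w j i = -w i j)
    (hcyc : ∀ (v : V) (c : G.Walk v v), c.IsCycle → c.weight w = 0)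
    {u v : V} (h : G.Adj u v) {p : G.Walk v u} (hp : p.IsPath) :
    (cons h p).weight w = 0 := by
  by_cases he : s(u, v) ∈ p.edges
  · rw [hp.eq_adj_toWalk_of_mem_edges (Sym2.eq_swap ▸ he)]
    simp only [Adj.toWalk, weight_cons, weight_nil, add_zero, hw u v, add_neg_cancel]
  · exact hcyc u _ ((cons_isCycle_iff p h).mpr ⟨hp, he⟩)

lemma weight_bypass (hw : ∀ i j, w j i = -w i j)
    (hcyc : ∀ (v : V) (c : G.Walk v v), c.IsCycle → c.weight w = 0)
    [DecidableEq V] {u v : V} (p : G.Walk u v) :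
    p.bypass.weight w = p.weight w := by
  induction p with
  | nil => rfl
  | @cons u v x h p ih =>
    rw [bypass]
    split_ifs with hs
    · have hloop := weight_cons_of_isPath hw hcyc h (p.bypass_isPath.takeUntil hs)
      rw [← p.bypass.take_spec hs, weight_append] at ih
      rw [weight_cons] at hloop
      rw [weight_cons, ← ih, ← add_assoc, hloop, zero_add]
    · rw [weight_cons, weight_cons, ih]

lemma weight_eq_zero_of_closed (hw : ∀ i j, w j i = -w i j)
    (hcyc : ∀ (v : V) (c : G.Walk v v), c.IsCycle → c.weight w = 0)
    {v : V} (p : G.Walk v v) : p.weight w = 0 := by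
  classical
  rw [← weight_bypass hw hcyc, (isPath_iff_nil.mp p.bypass_isPath).eq_nil, weight_nil]

end SimpleGraph.Walk

lemma SimpleGraph.Connected.exists_potential {V A : Type*} [AddCommGroup A]
    {G : SimpleGraph V} (hG : G.Connected) {w : V → V → A} (hw : ∀ i j, w j i = -w i j)
    (hcyc : ∀ (v : V) (c : G.Walk v v), c.IsCycle → c.weight w = 0) :
    ∃ α : V → A, ∀ i j, G.Adj i j → α j - α i = w i j := by
  obtain ⟨v₀⟩ := hG.nonempty
  let walkFrom (u : V) : G.Walk v₀ u := (hG.preconnected v₀ u).some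
  refine ⟨fun u => (walkFrom u).weight w, fun i j hij => ?_⟩
  have hclosed := Walk.weight_eq_zero_of_closed hw hcyc
    (((walkFrom i).concat hij).append (walkFrom j).reverse)
  rw [Walk.weight_append, Walk.concat_eq_append, Walk.weight_append,
    Walk.weight_reverse hw] at hclosed
  simp only [Walk.weight_cons, Walk.weight_nil, add_zero] at hclosed
  rw [← sub_eq_zero, ← neg_eq_zero, ← hclosed]
  abel

lemma zero_mem_convexHull_of_mem_of_neg_mem {E : Type*} [AddCommGroup E] [Module ℝ E]
    {s : Set E} {x : E} (hx : x ∈ s) (hnx : -x ∈ s) : (0 : E) ∈ convexHull ℝ s := by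
  have hmid : (0 : E) = (1 / 2 : ℝ) • x + (1 / 2 : ℝ) • -x := by module
  rw [hmid]
  exact convex_convexHull ℝ s (subset_convexHull ℝ s hx) (subset_convexHull ℝ s hnx)
    (by norm_num) (by norm_num) (by norm_num)

lemma inn_stdBasis_sub {N : ℕ} (i j : Fin N) (α : Fin N → ℝ) :
    inn (stdBasis i - stdBasis j) α = α i - α j := by
  change (stdBasis i - stdBasis j) ⬝ᵥ α = _
  simp [stdBasis, sub_dotProduct, single_dotProduct]

section faceSign

variable {N : ℕ} (F : Set (Fin N → ℝ))

noncomputable def faceSign (i j : Fin N) : ℝ :=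
  F.indicator 1 (stdBasis i - stdBasis j) - F.indicator 1 (stdBasis j - stdBasis i)

lemma faceSign_swap (i j : Fin N) : faceSign F j i = -faceSign F i j :=
  (neg_sub _ _).symm

lemma faceSign_le_one (i j : Fin N) : faceSign F i j ≤ 1 := by
  unfold faceSign
  have h1 : F.indicator 1 (stdBasis i - stdBasis j) ≤ (1 : ℝ) :=
    Set.indicator_le_self' (fun _ _ => zero_le_one) _
  have h2 : (0 : ℝ) ≤ F.indicator 1 (stdBasis j - stdBasis i) :=
    Set.indicator_nonneg (fun _ _ => zero_le_one) _
  linarith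

variable {F}

lemma faceSign_eq_one_iff (h0 : (0 : Fin N → ℝ) ∉ convexHull ℝ F) (i j : Fin N) :
    faceSign F i j = 1 ↔ stdBasis i - stdBasis j ∈ F := by
  have hnot : stdBasis i - stdBasis j ∈ F → stdBasis j - stdBasis i ∉ F := fun hij hji =>
    h0 (zero_mem_convexHull_of_mem_of_neg_mem hij (by rwa [neg_sub]))
  by_cases hij : stdBasis i - stdBasis j ∈ F
  · simp [faceSign, hij, hnot hij]
  · by_cases hji : stdBasis j - stdBasis i ∈ F <;> norm_num [faceSign, hij, hji]

lemma weight_faceSign_eq {G : SimpleGraph (Fin N)} {u v : Fin N} (c : G.Walk u v) :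
    c.weight (faceSign F) =
      Nat.card {r : Fin c.length //
          stdBasis (c.getVert (r : ℕ)) - stdBasis (c.getVert ((r : ℕ) + 1)) ∈ F} -
      Nat.card {r : Fin c.length //
          stdBasis (c.getVert ((r : ℕ) + 1)) - stdBasis (c.getVert (r : ℕ)) ∈ F} := by
  classical
  rw [c.weight_eq_sum_getVert]
  simp only [faceSign, Finset.sum_sub_distrib, Set.indicator_apply,
    Pi.one_apply, Finset.sum_boole, Nat.card_eq_fintype_card, Fintype.card_subtype]

end faceSign

lemma isFace_of_faceSign_potential {N : ℕ} {G : SimpleGraph (Fin N)} {F : Set (Fin N → ℝ)}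
    (hFsub : F ⊆ nabla G) (h0 : (0 : Fin N → ℝ) ∉ convexHull ℝ F) {α : Fin N → ℝ}
    (hα : ∀ i j, G.Adj i j → α j - α i = faceSign F i j) : IsFace G F := by
  have hinn : ∀ i j, G.Adj i j → inn (stdBasis i - stdBasis j) α = -faceSign F i j := by
    intro i j hij
    rw [inn_stdBasis_sub, ← hα i j hij, neg_sub]
  refine ⟨α, ?_, ?_⟩
  · rintro _ ⟨i, j, hij, rfl⟩
    rw [hinn i j hij, neg_le_neg_iff]
    exact faceSign_le_one F i j
  · ext x
    constructor
    · intro hx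
      obtain ⟨i, j, hij, rfl⟩ := hFsub hx
      exact ⟨hFsub hx, by rw [hinn i j hij, (faceSign_eq_one_iff h0 i j).mpr hx]⟩
    · rintro ⟨⟨i, j, hij, rfl⟩, hx⟩
      rw [hinn i j hij, neg_inj] at hx
      exact (faceSign_eq_one_iff h0 i j).mp hx

theorem stmt11 {N : ℕ} (G : SimpleGraph (Fin N)) (hG : G.Connected)
    (F : Set (Fin N → ℝ)) (hFsub : F ⊆ nabla G)
    (hdim : Module.finrank ℝ (vectorSpan ℝ F) = N - 2)
    (h0 : (0 : Fin N → ℝ) ∉ convexHull ℝ F)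
    (hbal : ∀ (v : Fin N) (c : G.Walk v v), c.IsCycle →
      Nat.card {r : Fin c.length //
          stdBasis (c.getVert (r : ℕ)) - stdBasis (c.getVert ((r : ℕ) + 1)) ∈ F} =
      Nat.card {r : Fin c.length //
          stdBasis (c.getVert ((r : ℕ) + 1)) - stdBasis (c.getVert (r : ℕ)) ∈ F}) :
    IsFacet G F := by
  have hcyc : ∀ (v : Fin N) (c : G.Walk v v), c.IsCycle → c.weight (faceSign F) = 0 :=
    fun v c hc => by rw [weight_faceSign_eq, hbal v c hc, sub_self]
  obtain ⟨α, hα⟩ := hG.exists_potential (faceSign_swap F) hcyc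
  exact ⟨isFace_of_faceSign_potential hFsub h0 hα, hdim⟩
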